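/- Let U = {u, v, w} be the basis of a 3-maximal submonoid of Σ*, let A = {𝐚, 𝐛, 𝐜} be a three-letter alphabet, and let h : A* → Σ* be the monoid morphism with h(𝐚) = u, h(𝐛) = v, h(𝐜) = w. Then for all 𝐮, 𝐮' ∈ A*, the word h(𝐮) is a prefix of h(𝐮') if and only if 𝐮 is a prefix of 𝐮'. -/

import Mathlib

/-!
If a basis element `y` of a `k`-maximal submonoid had a proper prefix `x` in the basis, say
`y = x t`, then replacing `y` by `t` in the basis gives a set of at most `k` words whose closure
still contains `y`. Maximality makes the two closures equal, so `t` lies in the original monoid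
and `y = x t` is decomposable, a contradiction. Hence the basis is a prefix code, and a morphism
mapping the letters injectively onto a prefix code reflects prefixes: the first letters of
`𝐮` and `𝐮'` have comparable, hence equal, images, so they agree and can be cancelled.
-/

/-- The basis of a submonoid `M` of the free monoid `Σ*`: `(M \ {ε}) \ (M \ {ε})²`. -/
def basisOf {α : Type*} (M : Submonoid (FreeMonoid α)) : Set (FreeMonoid α) :=
  ((M : Set (FreeMonoid α)) \ {1}) \
    {w | ∃ u ∈ (M : Set (FreeMonoid α)) \ {1}, ∃ v ∈ (M : Set (FreeMonoid α)) \ {1}, w = u * v}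

/-- A submonoid of `Σ*` is `k`-maximal if its rank (cardinality of its basis) is at most `k`
and it is maximal (w.r.t. inclusion) among submonoids of rank at most `k`. -/
def IsKMaximal {α : Type*} (k : ℕ) (M : Submonoid (FreeMonoid α)) : Prop :=
  (basisOf M).Finite ∧ (basisOf M).ncard ≤ k ∧
    ∀ M' : Submonoid (FreeMonoid α),
      (basisOf M').Finite → (basisOf M').ncard ≤ k → M ≤ M' → M = M'

open Set Submonoid FreeMonoid

section

variable {α β : Type*}

def IsPrefixCode (S : Set (FreeMonoid α)) : Prop :=
  1 ∉ S ∧ ∀ x ∈ S, ∀ y ∈ S, ∀ t, y = x * t → x = y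

lemma FreeMonoid.exists_eq_mul_or_exists_eq_mul_of_mul_eq_mul {x y X Y : FreeMonoid α}
    (h : x * X = y * Y) : (∃ t, y = x * t) ∨ ∃ t, x = y * t := by
  rcases List.append_eq_append_iff.mp (congrArg toList h) with ⟨t, hy, -⟩ | ⟨t, hx, -⟩
  · exact .inl ⟨ofList t, hy⟩
  · exact .inr ⟨ofList t, hx⟩

lemma IsPrefixCode.eq_of_mul_eq_mul {S : Set (FreeMonoid α)} (hS : IsPrefixCode S)
    {x y X Y : FreeMonoid α} (hx : x ∈ S) (hy : y ∈ S) (h : x * X = y * Y) : x = y := by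
  rcases exists_eq_mul_or_exists_eq_mul_of_mul_eq_mul h with ⟨t, ht⟩ | ⟨t, ht⟩
  · exact hS.2 x hx y hy t ht
  · exact (hS.2 y hy x hx t ht).symm

lemma basisOf_closure_subset (S : Set (FreeMonoid α)) : basisOf (closure S) ⊆ S := by
  rintro m ⟨⟨hm, hm1⟩, hm_indec⟩
  induction hm using closure_induction with
  | mem x hx => exact hx
  | one => exact absurd rfl hm1
  | mul x y hx hy ihx ihy =>
    by_cases hx1 : x = 1
    · subst hx1
      rw [one_mul] at hm1 hm_indec ⊢
      exact ihy hm_indec hm1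
    by_cases hy1 : y = 1
    · subst hy1
      rw [mul_one] at hm1 hm_indec ⊢
      exact ihx hm_indec hm1
    exact absurd ⟨x, ⟨hx, hx1⟩, y, ⟨hy, hy1⟩, rfl⟩ hm_indec

lemma IsKMaximal.eq_closure_of_le {k : ℕ} {M : Submonoid (FreeMonoid α)} (hM : IsKMaximal k M)
    {T : Set (FreeMonoid α)} (hT : T.Finite) (hTk : T.ncard ≤ k) (hle : M ≤ closure T) :
    M = closure T :=
  hM.2.2 _ (hT.subset (basisOf_closure_subset T))
    ((ncard_le_ncard (basisOf_closure_subset T) hT).trans hTk) hle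

lemma IsKMaximal.isPrefixCode {k : ℕ} {S : Set (FreeMonoid α)} (hmax : IsKMaximal k (closure S))
    (hbasis : basisOf (closure S) = S) : IsPrefixCode S := by
  have hS_fin : S.Finite := hbasis ▸ hmax.1
  have hSk : S.ncard ≤ k := hbasis ▸ hmax.2.1
  have hone : (1 : FreeMonoid α) ∉ S := by
    rw [← hbasis]
    exact fun h1 ↦ h1.1.2 rfl
  refine ⟨hone, ?_⟩
  rintro x hx y hy t rfl
  by_contra hxy
  have ht1 : t ≠ 1 := by
    rintro rfl
    exact hxy (mul_one x).symm
  set T := insert t (S \ {x * t})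
  have hle : closure S ≤ closure T := closure_le.2 fun z hz ↦ by
    by_cases hzy : z = x * t
    · exact hzy ▸ mul_mem (subset_closure (.inr ⟨hx, hxy⟩)) (subset_closure (mem_insert t _))
    · exact subset_closure (.inr ⟨hz, hzy⟩)
  have hTk : T.ncard ≤ k :=
    (ncard_insert_le _ _).trans ((ncard_sdiff_singleton_lt_of_mem hy hS_fin).trans_le hSk)
  have hST := hmax.eq_closure_of_le (hS_fin.sdiff.insert t) hTk hle
  have ht : t ∈ closure S := hST ▸ subset_closure (mem_insert t _)
  have hy_basis : x * t ∈ basisOf (closure S) := by rwa [hbasis]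
  exact hy_basis.2 ⟨x, ⟨subset_closure hx, ne_of_mem_of_not_mem hx hone⟩, t, ⟨ht, ht1⟩, rfl⟩

lemma MonoidHom.exists_mul_eq_iff_of_isPrefixCode (h : FreeMonoid β →* FreeMonoid α)
    (hinj : (h ∘ of).Injective) (hcode : IsPrefixCode (Set.range (h ∘ of))) (p q : FreeMonoid β) :
    (∃ z, h q = h p * z) ↔ ∃ z, q = p * z := by
  refine ⟨fun hpq ↦ ?_, fun ⟨z, hz⟩ ↦ ⟨h z, by rw [hz, map_mul]⟩⟩
  induction p using FreeMonoid.inductionOn' generalizing q with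
  | one => exact ⟨q, (one_mul q).symm⟩
  | of_mul a p ih =>
    obtain ⟨z, hz⟩ := hpq
    cases q with
    | one =>
      rw [map_one, map_mul, mul_assoc] at hz
      exact absurd (LeftCancelMonoid.eq_one_of_mul_right hz.symm)
        (ne_of_mem_of_not_mem (mem_range_self a) hcode.1)
    | of_mul b q =>
      rw [map_mul, map_mul, mul_assoc] at hz
      have hba := hinj (hcode.eq_of_mul_eq_mul (mem_range_self b) (mem_range_self a) hz)
      subst hba
      obtain ⟨z', rfl⟩ := ih q ⟨z, mul_left_cancel hz⟩
      exact ⟨z', (mul_assoc _ _ _).symm⟩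

end

/-- If `{u, v, w}` is the basis of a 3-maximal submonoid and `h` is the morphism
from the free monoid over a three-letter alphabet sending the letters to `u`, `v`, `w`,
then `h 𝐮` is a prefix of `h 𝐮'` iff `𝐮` is a prefix of `𝐮'`. -/
theorem prefix_iff_prefix_of_kMaximal {α : Type*} (u v w : FreeMonoid α)
    (hcard : ({u, v, w} : Set (FreeMonoid α)).ncard = 3)
    (hbasis : basisOf (Submonoid.closure {u, v, w}) = {u, v, w})
    (hmax : IsKMaximal 3 (Submonoid.closure ({u, v, w} : Set (FreeMonoid α))))
    (h : FreeMonoid (Fin 3) →* FreeMonoid α)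
    (ha : h (FreeMonoid.of 0) = u) (hb : h (FreeMonoid.of 1) = v)
    (hc : h (FreeMonoid.of 2) = w) :
    ∀ p q : FreeMonoid (Fin 3),
      (∃ z : FreeMonoid α, h q = h p * z) ↔ (∃ z : FreeMonoid (Fin 3), q = p * z) := by
  have hrange : Set.range (h ∘ of) = {u, v, w} := by
    ext x
    simp [Fin.exists_fin_succ, ha, hb, hc, eq_comm]
  have hinj : (h ∘ of).Injective := by
    rw [← injOn_univ]
    refine injOn_of_ncard_image_eq ?_
    rw [image_univ, hrange, hcard, ncard_univ, Nat.card_eq_fintype_card, Fintype.card_fin]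
  exact h.exists_mul_eq_iff_of_isPrefixCode hinj (hrange ▸ hmax.isPrefixCode hbasis)
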